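/- arXiv:1101.4884 — 2 statements merged into one kernel-verified Lean document; each statement's English description precedes it below -/
import Mathlib

section
/- Let n ≥ 4 and let C be the Cartan matrix of type D_n: the n×n integer matrix with C(i,i) = 2 for all i, C(1,3) = C(3,1) = C(2,3) = C(3,2) = −1, C(i,i+1) = C(i+1,i) = −1 for 3 ≤ i ≤ n−1, and all other entries 0 (nodes 1 and 2 are the two short legs of the Dynkin diagram, both attached to node 3). The transposition swapping 1 and 2 preserves C, and the folded matrix of C by the group it generates, with orbits ordered {1,2}, {3}, {4}, …, {n}, is the (n−1)×(n−1) integer matrix M with M(i,i) = 2 for all i, M(1,2) = −1, M(2,1) = −2, M(i,i+1) = M(i+1,i) = −1 for 2 ≤ i ≤ n−2, and all other entries 0 (the Cartan matrix of type C_{n−1}). This is the paper's identity 'D_n/ℤ₂ = C_{n−1}'. -/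
/-- The Cartan matrix of type `D_n` (indices `1,…,n`, defined on all of `ℕ`),
where nodes `1` and `2` are the two short legs of the Dynkin diagram, both
attached to node `3`: `2` on the diagonal, `-1` at `(1,3),(3,1),(2,3),(3,2)`
and at adjacent pairs `(i,i+1),(i+1,i)` with `i ≥ 3`, and `0` otherwise. -/
def cartanD (i j : ℕ) : ℤ :=
  if i = j then 2
  else if (min i j = 1 ∨ min i j = 2) ∧ max i j = 3 then -1
  else if 3 ≤ min i j ∧ (i = j + 1 ∨ j = i + 1) then -1
  else 0

/-- The transposition of `{1,…,n}` swapping `1` and `2`. -/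
def swapD (i : ℕ) : ℕ := if i = 1 then 2 else if i = 2 then 1 else i

/-- The orbits of the transposition `(1 2)` on `{1,…,n}`, ordered
`{1,2}, {3}, {4}, …, {n}` (so indexed by `a = 1,…,n-1`). -/
def orbD (a : ℕ) : Finset ℕ := if a = 1 then {1, 2} else {a + 1}

/-- A representative of the orbit `orbD a`. -/
def repD (a : ℕ) : ℕ := if a = 1 then 1 else a + 1

theorem cartanD_swapD (i j : ℕ) : cartanD (swapD i) (swapD j) = cartanD i j := by
  unfold cartanD swapD
  split_ifs <;> omega

theorem sum_orbD_cartanD_repD {a b : ℕ} (ha : 1 ≤ a) (hb : 1 ≤ b) :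
    (∑ k ∈ orbD b, cartanD (repD a) k) =
      if a = b then 2
      else if a = 2 ∧ b = 1 then -2
      else if a = b + 1 ∨ b = a + 1 then -1
      else 0 := by
  by_cases hb1 : b = 1
  -- the orbit column `{1, 2}` collects both legs of node `3`, which gives the entry `-2`
  · rw [hb1, orbD, if_pos rfl, Finset.sum_pair (by norm_num)]
    unfold repD cartanD
    split_ifs <;> omega
  · rw [orbD, if_neg hb1, Finset.sum_singleton]
    unfold repD cartanD
    split_ifs <;> omega

theorem fold_D_eq_C_general (n : ℕ) :
    (∀ i ∈ Finset.Icc 1 n, ∀ j ∈ Finset.Icc 1 n,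
      cartanD (swapD i) (swapD j) = cartanD i j) ∧
    (∀ a ∈ Finset.Icc 1 (n - 1), ∀ b ∈ Finset.Icc 1 (n - 1),
      (∑ k ∈ orbD b, cartanD (repD a) k) =
        if a = b then 2
        else if a = 2 ∧ b = 1 then -2
        else if a = b + 1 ∨ b = a + 1 then -1
        else 0) :=
  ⟨fun i _ j _ => cartanD_swapD i j,
    fun _ ha _ hb => sum_orbD_cartanD_repD (Finset.mem_Icc.1 ha).1 (Finset.mem_Icc.1 hb).1⟩

/-- For `n ≥ 4`, the transposition swapping the two short legs `1` and `2`
preserves the Cartan matrix of type `D_n`, and the folded matrix by the group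
it generates, with orbits ordered `{1,2}, {3}, …, {n}`, is the
`(n-1)×(n-1)` Cartan matrix of type `C_{n-1}`: diagonal `2`, entry `-1` at
`(1,2)`, entry `-2` at `(2,1)`, entries `-1` at the remaining adjacent pairs,
and `0` elsewhere.  This is the paper's identity `D_n/ℤ₂ = C_{n-1}`. -/
theorem fold_D_eq_C (n : ℕ) (hn : 4 ≤ n) :
    (∀ i ∈ Finset.Icc 1 n, ∀ j ∈ Finset.Icc 1 n,
      cartanD (swapD i) (swapD j) = cartanD i j) ∧
    (∀ a ∈ Finset.Icc 1 (n - 1), ∀ b ∈ Finset.Icc 1 (n - 1),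
      (∑ k ∈ orbD b, cartanD (repD a) k) =
        if a = b then 2
        else if a = 2 ∧ b = 1 then -2
        else if a = b + 1 ∨ b = a + 1 then -1
        else 0) :=
  fold_D_eq_C_general n
end

section
/- Let n ≥ 1 and let C be the Cartan matrix of type A_{2n}. The involution σ of {1,…,2n} given by σ(i) = 2n+1−i preserves C and has no fixed points; its orbits are O_j = {j, 2n+1−j} for 1 ≤ j ≤ n. The folded matrix of C by the group generated by σ, with orbits ordered O_n, O_{n−1}, …, O_1, equals the n×n integer matrix 𝕌_n defined by 𝕌_n(1,1) = 1, 𝕌_n(i,i) = 2 for 2 ≤ i ≤ n, 𝕌_n(i,j) = −1 whenever |i−j| = 1, and all other entries 0. This is the paper's claim that the matrix 𝕌_n is obtained from the root system A_{2n} modulo the involution of its Dynkin diagram. -/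
/-- The Cartan matrix of type `A_m` (indices `1,…,m`, defined on all of `ℕ`):
`2` on the diagonal, `-1` on adjacent indices, `0` otherwise. -/
def cartanA (i j : ℕ) : ℤ :=
  if i = j then 2 else if i = j + 1 ∨ j = i + 1 then -1 else 0

/-- The matrix `𝕌_n` of the paper: `𝕌_n(1,1) = 1`, `𝕌_n(i,i) = 2` for
`2 ≤ i ≤ n`, `𝕌_n(i,j) = -1` for `|i-j| = 1`, and `0` otherwise. -/
def matU (i j : ℕ) : ℤ :=
  if i = 1 ∧ j = 1 then 1
  else if i = j then 2
  else if i = j + 1 ∨ j = i + 1 then -1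
  else 0

/-!
Pair each orbit `{n+1-b, n+b}` into its two halves of the diagram of `A_{2n}`.  The row of
`n+1-a` against the lower half is the Cartan matrix of `A_n` read backwards, i.e. `A_n` itself;
against the upper half it vanishes except for the single edge between the middle nodes `n` and
`n+1`, which lies inside the orbit `O_n` and lowers the `(1,1)` entry from `2` to `1`.
-/

theorem cartanA_reflect {m i j : ℕ} (hi : i ≤ m) (hj : j ≤ m) :
    cartanA (m + 1 - i) (m + 1 - j) = cartanA i j := by
  unfold cartanA
  split_ifs <;> omega

theorem cartanA_sub_add {n a b : ℕ} (ha : 1 ≤ a) (ha' : a ≤ n) (hb : 1 ≤ b) :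
    cartanA (n + 1 - a) (n + b) = if a = 1 ∧ b = 1 then -1 else 0 := by
  unfold cartanA
  split_ifs <;> omega

theorem matU_eq_cartanA_add (a b : ℕ) :
    matU a b = cartanA a b + if a = 1 ∧ b = 1 then -1 else 0 := by
  unfold matU cartanA
  split_ifs <;> omega

theorem fold_A_even_eq_U_general (n : ℕ) :
    (∀ i ∈ Finset.Icc 1 (2 * n), ∀ j ∈ Finset.Icc 1 (2 * n),
      cartanA (2 * n + 1 - i) (2 * n + 1 - j) = cartanA i j) ∧
    (∀ i ∈ Finset.Icc 1 (2 * n), 2 * n + 1 - i ≠ i) ∧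
    (∀ a ∈ Finset.Icc 1 n, ∀ b ∈ Finset.Icc 1 n,
      (∑ k ∈ ({n + 1 - b, n + b} : Finset ℕ), cartanA (n + 1 - a) k)
        = matU a b) := by
  refine ⟨?_, ?_, ?_⟩
  · intro i hi j hj
    exact cartanA_reflect (Finset.mem_Icc.1 hi).2 (Finset.mem_Icc.1 hj).2
  · intro i hi
    have := Finset.mem_Icc.1 hi
    omega
  · intro a ha b hb
    obtain ⟨ha₁, ha₂⟩ := Finset.mem_Icc.1 ha
    obtain ⟨hb₁, hb₂⟩ := Finset.mem_Icc.1 hb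
    rw [Finset.sum_pair (by omega), cartanA_reflect ha₂ hb₂, cartanA_sub_add ha₁ ha₂ hb₁,
      matU_eq_cartanA_add]

/-- The involution `σ(i) = 2n+1-i` of `{1,…,2n}` preserves the Cartan matrix
of type `A_{2n}` and has no fixed points; its orbits are
`O_j = {j, 2n+1-j}` for `1 ≤ j ≤ n`.  The folded matrix of `A_{2n}` by the
group generated by `σ`, with orbits ordered `O_n, O_{n-1}, …, O_1` (so the
`a`-th index corresponds to the orbit `O_{n+1-a} = {n+1-a, n+a}` with
representative `n+1-a`), equals the matrix `𝕌_n`.  This is the paper's claim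
that `𝕌_n` is obtained from the root system `A_{2n}` modulo the involution of
its Dynkin diagram. -/
theorem fold_A_even_eq_U (n : ℕ) (hn : 1 ≤ n) :
    (∀ i ∈ Finset.Icc 1 (2 * n), ∀ j ∈ Finset.Icc 1 (2 * n),
      cartanA (2 * n + 1 - i) (2 * n + 1 - j) = cartanA i j) ∧
    (∀ i ∈ Finset.Icc 1 (2 * n), 2 * n + 1 - i ≠ i) ∧
    (∀ a ∈ Finset.Icc 1 n, ∀ b ∈ Finset.Icc 1 n,
      (∑ k ∈ ({n + 1 - b, n + b} : Finset ℕ), cartanA (n + 1 - a) k)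
        = matU a b) :=
  fold_A_even_eq_U_general n
end
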